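/- arXiv:1907.10125 — 4 statements merged into one kernel-verified Lean document; each statement's English description precedes it below -/
import Mathlib

section
/- Let Q be the cross product of two relations R₁ and R₂ with no shared attributes, with |R₁| = n₁ ≤ n₂ = |R₂|. If a solution removes s₁ tuples from R₁ and s₂ tuples from R₂, the number of output tuples removed is s₁·n₂ + s₂·n₁ − s₁·s₂. Consequently, replacing the s₂ tuples removed from R₂ by s₂ additional (previously unremoved) tuples of R₁ removes at least as many output tuples with the same total cost, provided s₁ + s₂ ≤ n₁. -/
/-- Cross product of two relations with no shared attributes: deleting `S₁ ⊆ R₁` and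
`S₂ ⊆ R₂` removes exactly `s₁·n₂ + s₂·n₁ − s₁·s₂` output pairs; and if `s₁ + s₂ ≤ n₁`,
replacing the `S₂`-deletions by `s₂` additional previously-unremoved tuples of `R₁`
removes at least as many output tuples at the same total cost. -/
theorem stmt1 {α β : Type*} [DecidableEq α] [DecidableEq β]
    (R₁ : Finset α) (R₂ : Finset β) (S₁ : Finset α) (S₂ : Finset β)
    (hS₁ : S₁ ⊆ R₁) (hS₂ : S₂ ⊆ R₂) (h12 : R₁.card ≤ R₂.card) :
    ((R₁ ×ˢ R₂).filter (fun p => p.1 ∈ S₁ ∨ p.2 ∈ S₂)).card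
      = S₁.card * R₂.card + S₂.card * R₁.card - S₁.card * S₂.card ∧
    (S₁.card + S₂.card ≤ R₁.card →
      ∃ S₁' : Finset α, S₁ ⊆ S₁' ∧ S₁' ⊆ R₁ ∧ S₁'.card = S₁.card + S₂.card ∧
        ((R₁ ×ˢ R₂).filter (fun p => p.1 ∈ S₁ ∨ p.2 ∈ S₂)).card ≤
          ((R₁ ×ˢ R₂).filter (fun p => p.1 ∈ S₁')).card) := by
  have hset : ((R₁ ×ˢ R₂).filter (fun p => p.1 ∈ S₁ ∨ p.2 ∈ S₂))
      = (S₁ ×ˢ R₂) ∪ (R₁ ×ˢ S₂) := by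
    ext ⟨a, b⟩
    simp only [Finset.mem_filter, Finset.mem_product, Finset.mem_union]
    constructor
    · rintro ⟨⟨ha, hb⟩, h | h⟩
      · exact Or.inl ⟨h, hb⟩
      · exact Or.inr ⟨ha, h⟩
    · rintro (⟨h1, h2⟩ | ⟨h1, h2⟩)
      · exact ⟨⟨hS₁ h1, h2⟩, Or.inl h1⟩
      · exact ⟨⟨h1, hS₂ h2⟩, Or.inr h2⟩
  have hinter : (S₁ ×ˢ R₂) ∩ (R₁ ×ˢ S₂) = S₁ ×ˢ S₂ := by
    ext ⟨a, b⟩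
    simp only [Finset.mem_inter, Finset.mem_product]
    constructor
    · rintro ⟨⟨h1, _⟩, ⟨_, h4⟩⟩; exact ⟨h1, h4⟩
    · rintro ⟨h1, h2⟩; exact ⟨⟨h1, hS₂ h2⟩, ⟨hS₁ h1, h2⟩⟩
  have hcard : ((R₁ ×ˢ R₂).filter (fun p => p.1 ∈ S₁ ∨ p.2 ∈ S₂)).card
      = S₁.card * R₂.card + S₂.card * R₁.card - S₁.card * S₂.card := by
    rw [hset, Finset.card_union, hinter, Finset.card_product, Finset.card_product,
      Finset.card_product]
    ring_nf
  refine ⟨hcard, fun hle => ?_⟩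
  obtain ⟨S₁', hsub, hsub', hcard'⟩ :=
    Finset.exists_subsuperset_card_eq hS₁ (Nat.le_add_right _ _) hle
  refine ⟨S₁', hsub, hsub', hcard', ?_⟩
  have hset' : ((R₁ ×ˢ R₂).filter (fun p => p.1 ∈ S₁')) = S₁' ×ˢ R₂ := by
    ext ⟨a, b⟩
    simp only [Finset.mem_filter, Finset.mem_product]
    exact ⟨fun ⟨⟨_, hb⟩, h⟩ => ⟨h, hb⟩, fun ⟨h1, h2⟩ => ⟨⟨hsub' h1, h2⟩, h1⟩⟩
  rw [hcard, hset', Finset.card_product, hcard', add_mul]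
  calc S₁.card * R₂.card + S₂.card * R₁.card - S₁.card * S₂.card
      ≤ S₁.card * R₂.card + S₂.card * R₁.card := Nat.sub_le _ _
    _ ≤ S₁.card * R₂.card + S₂.card * R₂.card := by
        exact Nat.add_le_add_left (Nat.mul_le_mul_left _ h12) _
end

section
/- For the cross product of two finite sets R₁ and R₂ with n₁ = |R₁| ≤ |R₂| = n₂, an optimal solution to removing at least k output pairs (where k ≤ n₁·n₂) is to remove any ⌈k/n₂⌉ elements of R₁; i.e., the minimum number of elements one must delete from R₁ ∪ R₂ so that at least k pairs (a,b) with a or b deleted exist is ⌈k/n₂⌉. -/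
lemma card_filter_del {α β : Type*} [DecidableEq α] [DecidableEq β]
    (R₁ : Finset α) (R₂ : Finset β) (S₁ : Finset α) (S₂ : Finset β)
    (h₁ : S₁ ⊆ R₁) (h₂ : S₂ ⊆ R₂) :
    ((R₁ ×ˢ R₂).filter (fun p => p.1 ∈ S₁ ∨ p.2 ∈ S₂)).card
      = R₁.card * R₂.card - (R₁.card - S₁.card) * (R₂.card - S₂.card) := by
  classical
  have hc : ((R₁ ×ˢ R₂).filter (fun p => ¬(p.1 ∈ S₁ ∨ p.2 ∈ S₂)))
      = (R₁ \ S₁) ×ˢ (R₂ \ S₂) := by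
    ext p
    simp only [Finset.mem_filter, Finset.mem_product, Finset.mem_sdiff, not_or]
    tauto
  have h := Finset.card_filter_add_card_filter_not
      (s := R₁ ×ˢ R₂) (p := fun p => p.1 ∈ S₁ ∨ p.2 ∈ S₂)
  rw [hc] at h
  rw [Finset.card_product, Finset.card_product, Finset.card_sdiff_of_subset h₁,
    Finset.card_sdiff_of_subset h₂] at h
  omega

lemma ceil_le_mul (n₂ k : ℕ) (h : 0 < n₂) : k ≤ ((k + n₂ - 1) / n₂) * n₂ := by
  have hdm := Nat.div_add_mod (k + n₂ - 1) n₂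
  have hmod := Nat.mod_lt (k + n₂ - 1) h
  have hcomm : n₂ * ((k + n₂ - 1) / n₂) = ((k + n₂ - 1) / n₂) * n₂ := mul_comm _ _
  omega

lemma ceil_le_of_le_mul (n₂ k c : ℕ) (h : 0 < n₂) (hk : k ≤ c * n₂) :
    (k + n₂ - 1) / n₂ ≤ c := by
  by_contra hcon
  push_neg at hcon
  have h1 : (c + 1) * n₂ ≤ ((k + n₂ - 1) / n₂) * n₂ := Nat.mul_le_mul_right _ hcon
  have h2 : ((k + n₂ - 1) / n₂) * n₂ ≤ k + n₂ - 1 := by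
    have := Nat.div_mul_le_self (k + n₂ - 1) n₂
    omega
  have h3 : (c + 1) * n₂ = c * n₂ + n₂ := by ring
  omega

lemma arith_mem (n₁ n₂ k m : ℕ) (hm : m ≤ n₁) (hkm : k ≤ m * n₂) :
    k ≤ n₁ * n₂ - (n₁ - m) * n₂ := by
  have h1 : (n₁ - m) * n₂ + m * n₂ = n₁ * n₂ := by
    rw [← add_mul, Nat.sub_add_cancel hm]
  omega

lemma arith_low (n₁ n₂ s₁ s₂ k : ℕ) (h12 : n₁ ≤ n₂) (hs₁ : s₁ ≤ n₁) (hs₂ : s₂ ≤ n₂)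
    (h : k ≤ n₁ * n₂ - (n₁ - s₁) * (n₂ - s₂)) : k ≤ (s₁ + s₂) * n₂ := by
  have h1 : (n₁ - s₁) * (n₂ - s₂) + (n₁ - s₁) * s₂ = (n₁ - s₁) * n₂ := by
    rw [← mul_add, Nat.sub_add_cancel hs₂]
  have h2 : (n₁ - s₁) * n₂ + s₁ * n₂ = n₁ * n₂ := by
    rw [← add_mul, Nat.sub_add_cancel hs₁]
  have h3 : (n₁ - s₁) * s₂ ≤ n₂ * s₂ :=
    Nat.mul_le_mul_right _ (le_trans (Nat.sub_le _ _) h12)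
  have h4 : n₂ * s₂ = s₂ * n₂ := mul_comm _ _
  have h5 : (s₁ + s₂) * n₂ = s₁ * n₂ + s₂ * n₂ := add_mul _ _ _
  omega

/-- For the cross product of two finite sets with `n₁ = |R₁| ≤ |R₂| = n₂` and
`1 ≤ k ≤ n₁·n₂`, the minimum number of elements to delete from `R₁ ∪ R₂` so that at
least `k` pairs have a deleted coordinate is `⌈k / n₂⌉`, achieved by deleting
elements of `R₁` only. -/
theorem stmt2 {α β : Type*} [DecidableEq α] [DecidableEq β]
    (R₁ : Finset α) (R₂ : Finset β) (k : ℕ)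
    (h12 : R₁.card ≤ R₂.card) (hk1 : 1 ≤ k) (hk2 : k ≤ R₁.card * R₂.card) :
    IsLeast {c : ℕ | ∃ S₁ : Finset α, ∃ S₂ : Finset β, S₁ ⊆ R₁ ∧ S₂ ⊆ R₂ ∧
        S₁.card + S₂.card = c ∧
        k ≤ ((R₁ ×ˢ R₂).filter (fun p => p.1 ∈ S₁ ∨ p.2 ∈ S₂)).card}
      ((k + R₂.card - 1) / R₂.card) := by
  classical
  have hn₂pos : 0 < R₂.card := by
    rcases Nat.eq_zero_or_pos R₂.card with h | h
    · rw [h, mul_zero] at hk2; omega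
    · exact h
  have hkm : k ≤ ((k + R₂.card - 1) / R₂.card) * R₂.card := ceil_le_mul _ _ hn₂pos
  have hmn₁ : (k + R₂.card - 1) / R₂.card ≤ R₁.card :=
    ceil_le_of_le_mul _ _ _ hn₂pos hk2
  constructor
  · obtain ⟨S₁, hS₁sub, hS₁card⟩ := Finset.exists_subset_card_eq hmn₁
    refine ⟨S₁, ∅, hS₁sub, Finset.empty_subset _, by simp [hS₁card], ?_⟩
    rw [card_filter_del R₁ R₂ S₁ ∅ hS₁sub (Finset.empty_subset _),
      hS₁card, Finset.card_empty, Nat.sub_zero]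
    exact arith_mem _ _ _ _ hmn₁ hkm
  · rintro c ⟨S₁, S₂, hS₁, hS₂, hcard, hkle⟩
    rw [card_filter_del R₁ R₂ S₁ S₂ hS₁ hS₂] at hkle
    have hkc : k ≤ c * R₂.card := by
      rw [← hcard]
      exact arith_low _ _ _ _ _ h12 (Finset.card_le_card hS₁)
        (Finset.card_le_card hS₂) hkle
    exact ceil_le_of_le_mul _ _ _ hn₂pos hkc
end

section
/- In the 2-path query setting, any solution deleting tuples from the middle relation R₂ can be replaced by one of equal size using only endpoint relations: if deleting a set T of input tuples removes at least k output tuples, then there is a set T' with |T'| ≤ |T|, T' ⊆ R₁ ∪ R₃, whose deletion also removes at least k output tuples. -/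
/-- 2-path query: any deletion set using the middle relation `R₂ = E` can be replaced by
one of at most the same size using only the endpoint relations `R₁ = U` and `R₃ = V`,
still removing at least `k` output tuples. -/
theorem stmt7 {α β : Type*} [DecidableEq α] [DecidableEq β]
    (U : Finset α) (V : Finset β) (E : Finset (α × β)) (hE : E ⊆ U ×ˢ V) (k : ℕ)
    (S₁ : Finset α) (S₂ : Finset (α × β)) (S₃ : Finset β)
    (hS₁ : S₁ ⊆ U) (hS₂ : S₂ ⊆ E) (hS₃ : S₃ ⊆ V)
    (hrem : k ≤ (E.filter (fun e => e.1 ∈ S₁ ∨ e ∈ S₂ ∨ e.2 ∈ S₃)).card) :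
    ∃ S₁' : Finset α, ∃ S₃' : Finset β, S₁' ⊆ U ∧ S₃' ⊆ V ∧
      S₁'.card + S₃'.card ≤ S₁.card + S₂.card + S₃.card ∧
      k ≤ (E.filter (fun e => e.1 ∈ S₁' ∨ e.2 ∈ S₃')).card := by
  refine ⟨S₁ ∪ S₂.image Prod.fst, S₃, ?_, hS₃, ?_, ?_⟩
  · intro a ha
    rcases Finset.mem_union.mp ha with h | h
    · exact hS₁ h
    · rcases Finset.mem_image.mp h with ⟨e, he, rfl⟩
      exact (Finset.mem_product.mp (hE (hS₂ he))).1
  · calc (S₁ ∪ S₂.image Prod.fst).card + S₃.card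
        ≤ (S₁.card + (S₂.image Prod.fst).card) + S₃.card := by
          exact Nat.add_le_add_right (Finset.card_union_le _ _) _
      _ ≤ (S₁.card + S₂.card) + S₃.card := by
          exact Nat.add_le_add_right (Nat.add_le_add_left (Finset.card_image_le) _) _
  · refine le_trans hrem (Finset.card_le_card ?_)
    intro e he
    rw [Finset.mem_filter] at he ⊢
    refine ⟨he.1, ?_⟩
    rcases he.2 with h | h | h
    · exact Or.inl (Finset.mem_union_left _ h)
    · exact Or.inl (Finset.mem_union_right _ (Finset.mem_image_of_mem _ h))
    · exact Or.inr h
end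

section
/- Existence of a 'path pattern' among pairwise-intersecting attribute sets: let 𝔸₁,…,𝔸_p (p ≥ 3) be finite sets that pairwise intersect, such that no element lies in all of them, and no two distinct elements lie in exactly the same subfamily of sets. Then there exist indices i, j, l and elements A, B with A ∈ 𝔸ᵢ ∩ 𝔸ⱼ, A ∉ 𝔸_l, B ∈ 𝔸ⱼ ∩ 𝔸_l, and B ∉ 𝔸ᵢ. -/
/-- Path pattern among pairwise-intersecting attribute sets: if `𝔸₁, …, 𝔸_p` (`p ≥ 3`)
pairwise intersect, no element lies in all of them, and no two distinct elements lie in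
exactly the same subfamily, then there are indices `i, j, l` and elements `A, B` with
`A ∈ 𝔸ᵢ ∩ 𝔸ⱼ`, `A ∉ 𝔸ₗ`, `B ∈ 𝔸ⱼ ∩ 𝔸ₗ`, `B ∉ 𝔸ᵢ`. -/
theorem stmt15 {α : Type*} [DecidableEq α] {p : ℕ} (hp : 3 ≤ p)
    (𝔸 : Fin p → Finset α)
    (hpair : ∀ i j : Fin p, i ≠ j → (𝔸 i ∩ 𝔸 j).Nonempty)
    (hnocommon : ¬ ∃ A : α, ∀ i, A ∈ 𝔸 i)
    (hdistinct : ∀ A B : α, A ≠ B → {i : Fin p | A ∈ 𝔸 i} ≠ {i : Fin p | B ∈ 𝔸 i}) :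
    ∃ (i j l : Fin p) (A B : α),
      A ∈ 𝔸 i ∧ A ∈ 𝔸 j ∧ A ∉ 𝔸 l ∧ B ∈ 𝔸 j ∧ B ∈ 𝔸 l ∧ B ∉ 𝔸 i := by
  by_contra hcon
  push_neg at hcon
  push_neg at hnocommon
  -- pick a pair (i,j) with i ≠ j minimizing |𝔸 i ∩ 𝔸 j|
  set T : Finset (Fin p × Fin p) := Finset.univ.filter (fun q => q.1 ≠ q.2) with hT
  have hTne : T.Nonempty := by
    refine ⟨(⟨0, by omega⟩, ⟨1, by omega⟩), ?_⟩
    simp [hT, Fin.ext_iff]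
  obtain ⟨q, hqT, hqmin⟩ := T.exists_min_image (fun q => (𝔸 q.1 ∩ 𝔸 q.2).card) hTne
  obtain ⟨i, j⟩ := q
  have hij : i ≠ j := by simpa [hT] using hqT
  obtain ⟨A, hA⟩ := hpair i j hij
  rw [Finset.mem_inter] at hA
  obtain ⟨l, hAl⟩ := hnocommon A
  have hlj : l ≠ j := fun h => hAl (h ▸ hA.2)
  -- 𝔸 l ∩ 𝔸 j ⊆ 𝔸 i, by the negation of the conclusion
  have hsub : 𝔸 l ∩ 𝔸 j ⊆ 𝔸 i := by
    intro B hB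
    rw [Finset.mem_inter] at hB
    exact hcon i j l A B hA.1 hA.2 hAl hB.2 hB.1
  have hsub2 : 𝔸 l ∩ 𝔸 j ⊆ 𝔸 i ∩ 𝔸 j :=
    fun B hB => Finset.mem_inter.mpr ⟨hsub hB, (Finset.mem_inter.mp hB).2⟩
  have hmin : (𝔸 i ∩ 𝔸 j).card ≤ (𝔸 l ∩ 𝔸 j).card := by
    have : (l, j) ∈ T := by simp [hT, hlj]
    simpa using hqmin (l, j) this
  have heq : 𝔸 l ∩ 𝔸 j = 𝔸 i ∩ 𝔸 j := Finset.eq_of_subset_of_card_le hsub2 hmin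
  have : A ∈ 𝔸 l ∩ 𝔸 j := heq ▸ Finset.mem_inter.mpr hA
  exact hAl (Finset.mem_inter.mp this).1
end
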